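/- arXiv:2202.03322 — 4 statements merged into one kernel-verified Lean document; each statement's English description precedes it below -/
import Mathlib

section
/- For any graph G, the minimum number of vertices whose deletion makes G bipartite is at most the minimum number of edges whose contraction makes G bipartite: oct(G) ≤ bc(G). -/
open SimpleGraph

/-- A set of vertices is a vertex cover if it meets every edge. -/
def IsVertexCover {V : Type*} (G : SimpleGraph V) (C : Set V) : Prop :=
  ∀ ⦃u v : V⦄, G.Adj u v → u ∈ C ∨ v ∈ C

/-- The minimum vertex cover number of a graph. -/
noncomputable def vc {V : Type*} (G : SimpleGraph V) : ℕ :=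
  sInf {n | ∃ C : Set V, _root_.IsVertexCover G C ∧ C.Finite ∧ Nat.card C = n}

/-- `X` is a minimum vertex cover of `G`. -/
def IsMinVertexCover {V : Type*} (G : SimpleGraph V) (X : Set V) : Prop :=
  _root_.IsVertexCover G X ∧ ∀ C : Set V, _root_.IsVertexCover G C → Nat.card X ≤ Nat.card C

/-- The rank of a graph: number of vertices minus number of connected components. -/
noncomputable def grank {V : Type*} (G : SimpleGraph V) : ℕ :=
  Nat.card V - Nat.card G.ConnectedComponent

/-- The rank of a set of vertices: the rank of the induced subgraph. -/
noncomputable def srank {V : Type*} (G : SimpleGraph V) (S : Set V) : ℕ :=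
  grank (G.induce S)

/-- The set of endpoints of a set of edges. -/
def edgeVerts {V : Type*} (F : Set (Sym2 V)) : Set V := {v | ∃ e ∈ F, v ∈ e}

/-- The setoid identifying the vertices connected through edges of `F`. -/
def contractSetoid {V : Type*} (F : Set (Sym2 V)) : Setoid V :=
  (SimpleGraph.fromEdgeSet F).reachableSetoid

/-- The graph obtained from `G` by contracting all the edges in `F`. -/
def contract {V : Type*} (G : SimpleGraph V) (F : Set (Sym2 V)) :
    SimpleGraph (Quotient (contractSetoid F)) where
  Adj a b := a ≠ b ∧ ∃ u v : V, Quotient.mk (contractSetoid F) u = a ∧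
    Quotient.mk (contractSetoid F) v = b ∧ G.Adj u v
  symm := ⟨by
    rintro a b ⟨hab, u, v, hu, hv, h⟩
    exact ⟨hab.symm, v, u, hv, hu, h.symm⟩⟩
  loopless := ⟨by rintro a ⟨h, -⟩; exact h rfl⟩


/-- The minimum size of an odd cycle transversal of `G`. -/
noncomputable def oct {V : Type*} (G : SimpleGraph V) : ℕ :=
  sInf {n | ∃ S : Set V, Nat.card S = n ∧ (G.induce (Sᶜ : Set V)).Colorable 2}

/-- The minimum number of edges whose contraction makes `G` bipartite. -/
noncomputable def bc {V : Type*} (G : SimpleGraph V) : ℕ :=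
  sInf {n | ∃ F : Set (Sym2 V), F ⊆ G.edgeSet ∧ Nat.card F = n ∧
    (contract G F).Colorable 2}

/-!
Contracting `F` only identifies vertices lying in a common component of the graph `(V, F)`.
Keep one vertex of each such component and delete the others: adding an edge to `F` merges at
most two components, so at most one more vertex has to go, and at most `|F|` vertices are
deleted in total. On the surviving vertices the contraction map is injective, so every
2-colouring of `G / F` pulls back to a 2-colouring of what is left of `G`.
-/

namespace SimpleGraph

variable {V : Type*}

lemma reachable_fromEdgeSet_insert {F : Set (Sym2 V)} {u v a b : V}
    (h : (fromEdgeSet (insert s(u, v) F)).Reachable a b) :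
    (fromEdgeSet F).Reachable a b ∨ (fromEdgeSet F).Reachable a u ∨
      (fromEdgeSet F).Reachable a v := by
  obtain ⟨p⟩ := h
  induction p with
  | nil => exact .inl .rfl
  | @cons a x b hadj _ ih =>
    obtain ⟨hmem, hne⟩ := fromEdgeSet_adj _ |>.mp hadj
    rcases hmem with hnew | hold
    · rcases Sym2.eq_iff.mp hnew with ⟨rfl, -⟩ | ⟨rfl, -⟩
      · exact .inr (.inl .rfl)
      · exact .inr (.inr .rfl)
    · have hax : (fromEdgeSet F).Reachable a x :=
        (fromEdgeSet_adj _ |>.mpr ⟨hold, hne⟩).reachable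
      exact ih.imp hax.trans (Or.imp hax.trans hax.trans)

lemma exists_encard_le_forall_reachable_eq {F : Set (Sym2 V)} (hF : F.Finite) :
    ∃ S : Set V, S.encard ≤ F.encard ∧
      ∀ a ∉ S, ∀ b ∉ S, (fromEdgeSet F).Reachable a b → a = b := by
  induction F, hF using Set.Finite.induction_on with
  | empty => exact ⟨∅, by simp, fun a _ b _ h => by simpa using h⟩
  | @insert e F he _ ih =>
    obtain ⟨S, hS, hSF⟩ := ih
    induction e using Sym2.ind with | _ u v =>
    set R := fromEdgeSet F
    -- the surviving vertex of the component of `u`, if any, is deleted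
    set T : Set V := {x | x ∉ S ∧ R.Reachable x u}
    have hT : T.encard ≤ 1 := Set.encard_le_one_iff.mpr fun x y hx hy =>
      hSF x hx.1 y hy.1 (hx.2.trans hy.2.symm)
    have hreach : ∀ a ∉ S ∪ T, ∀ b, (fromEdgeSet (insert s(u, v) F)).Reachable a b →
        R.Reachable a b ∨ R.Reachable a v := fun a ha b hab =>
      (reachable_fromEdgeSet_insert hab).imp_right fun h =>
        h.resolve_left fun hau => ha (.inr ⟨fun haS => ha (.inl haS), hau⟩)
    refine ⟨S ∪ T, ?_, fun a ha b hb hab => ?_⟩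
    · calc (S ∪ T).encard ≤ S.encard + T.encard := Set.encard_union_le S T
        _ ≤ F.encard + 1 := add_le_add hS hT
        _ = (insert s(u, v) F).encard := (Set.encard_insert_of_notMem he).symm
    · refine hSF a (fun h => ha (.inl h)) b (fun h => hb (.inl h)) ?_
      rcases hreach a ha b hab with hab' | hav
      · exact hab'
      rcases hreach b hb a hab.symm with hba | hbv
      · exact hba.symm
      · exact hav.trans hbv.symm

lemma contract_edgeSet_eq_bot (G : SimpleGraph V) : contract G G.edgeSet = ⊥ := by
  ext a b
  simp only [bot_adj, iff_false]
  rintro ⟨hne, u, v, rfl, rfl, huv⟩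
  exact hne (Quotient.sound (fromEdgeSet_adj _ |>.mpr ⟨huv, huv.ne⟩).reachable)

lemma Colorable.induce_compl_of_contract {G : SimpleGraph V} {F : Set (Sym2 V)} {S : Set V}
    {n : ℕ} (hS : ∀ a ∉ S, ∀ b ∉ S, (fromEdgeSet F).Reachable a b → a = b)
    (hC : (contract G F).Colorable n) : (G.induce Sᶜ).Colorable n :=
  hC.of_hom
    { toFun x := Quotient.mk (contractSetoid F) x
      map_rel' {x y} hxy := show (contract G F).Adj _ _ from
        ⟨fun h => hxy.ne (Subtype.ext (hS x x.2 y y.2 (Quotient.exact h))),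
          x, y, rfl, rfl, hxy⟩ }

end SimpleGraph

theorem stmt5 {V : Type*} [Fintype V] (G : SimpleGraph V) : oct G ≤ bc G := by
  refine le_csInf ⟨_, G.edgeSet, subset_rfl, rfl, ?_⟩ ?_
  · rw [contract_edgeSet_eq_bot]
    exact colorable_one_iff.mpr rfl |>.mono one_le_two
  rintro n ⟨F, -, rfl, hC⟩
  obtain ⟨S, hSF, hS⟩ := exists_encard_le_forall_reachable_eq F.toFinite
  calc oct G ≤ Nat.card S := Nat.sInf_le ⟨S, rfl, hC.induce_compl_of_contract hS⟩
    _ ≤ Nat.card F := by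
      simpa only [Nat.card_coe_set_eq, Set.ncard_def] using
        ENat.toNat_le_toNat hSF F.toFinite.encard_lt_top.ne
end

section
/- For a graph G and an integer ℓ, one can make G bipartite by contracting at most ℓ edges if and only if there exists a partition (V_L, V_R) of V(G) such that rank(G[V_L]) + rank(G[V_R]) ≤ ℓ, where the rank of a graph is its number of vertices minus its number of connected components. -/
open SimpleGraph

/-!
A 2-colouring of `contract G F` is the same thing as a bipartition `(S, Sᶜ)` such that every edge
of `F` stays inside a side and any two adjacent vertices of `G` on the same side are joined by a
path in `F`. For such a bipartition the edges of `F` inside a side `T` have the same components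
as `G[T]`, so `rank G[T]` is at most their number, since the rank of a graph never exceeds its
number of edges. Conversely, spanning forests of `G[S]` and `G[Sᶜ]` have at most `rank` many
edges, and contracting their union leaves a graph properly coloured by the two sides.
-/

namespace SimpleGraph

variable {W : Type*} {H K : SimpleGraph W}

theorem card_connectedComponent_le_of_forall_adj_reachable [Finite W]
    (h : ∀ a b, H.Adj a b → K.Reachable a b) :
    Nat.card K.ConnectedComponent ≤ Nat.card H.ConnectedComponent := by
  have hreach (a b : W) (hab : H.Reachable a b) : K.Reachable a b := by
    rw [reachable_iff_reflTransGen] at hab ⊢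
    exact Relation.reflTransGen_closed
      (fun a b hab ↦ (reachable_iff_reflTransGen a b).1 (h a b hab)) a b hab
  exact Nat.card_le_card_of_surjective (Quot.map id hreach) (Quot.ind fun v ↦ ⟨Quot.mk _ v, rfl⟩)

theorem Reachable.mem_iff_mem {S : Set W} (hS : ∀ a b, H.Adj a b → (a ∈ S ↔ b ∈ S)) {a b : W}
    (h : H.Reachable a b) : a ∈ S ↔ b ∈ S := by
  obtain ⟨p⟩ := h
  induction p with
  | nil => rfl
  | cons hadj _ ih => exact (hS _ _ hadj).trans ih

theorem Reachable.induce {S : Set W} (hS : ∀ a b, H.Adj a b → (a ∈ S ↔ b ∈ S)) {a b : W}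
    (h : H.Reachable a b) (ha : a ∈ S) (hb : b ∈ S) : (H.induce S).Reachable ⟨a, ha⟩ ⟨b, hb⟩ := by
  obtain ⟨p⟩ := h
  induction p with
  | nil => rfl
  | @cons x y z hxy p ih =>
    have hy : y ∈ S := (hS x y hxy).1 ha
    exact (show (H.induce S).Adj ⟨x, ha⟩ ⟨y, hy⟩ from hxy).reachable.trans (ih hy hb)

theorem Reachable.deleteEdges_or {u v a b : W} (h : H.Reachable a b) :
    (H.deleteEdges {s(u, v)}).Reachable a b ∨
      ((H.deleteEdges {s(u, v)}).Reachable a u ∨ (H.deleteEdges {s(u, v)}).Reachable a v) ∧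
      ((H.deleteEdges {s(u, v)}).Reachable b u ∨ (H.deleteEdges {s(u, v)}).Reachable b v) := by
  obtain ⟨p⟩ := h
  induction p with
  | nil => exact Or.inl .rfl
  | @cons x y z hxy p ih =>
    by_cases he : s(x, y) = s(u, v)
    · have hx : (H.deleteEdges {s(u, v)}).Reachable x u ∨
          (H.deleteEdges {s(u, v)}).Reachable x v := by
        rcases Sym2.eq_iff.1 he with ⟨rfl, -⟩ | ⟨rfl, -⟩ <;> simp
      have hy : (H.deleteEdges {s(u, v)}).Reachable y u ∨
          (H.deleteEdges {s(u, v)}).Reachable y v := by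
        rcases Sym2.eq_iff.1 he with ⟨-, rfl⟩ | ⟨-, rfl⟩ <;> simp
      refine Or.inr ⟨hx, ?_⟩
      rcases ih with hyz | ⟨-, hz⟩
      · exact hy.imp hyz.symm.trans hyz.symm.trans
      · exact hz
    · have hxy' : (H.deleteEdges {s(u, v)}).Adj x y := by simpa [he] using hxy
      exact ih.imp hxy'.reachable.trans
        (And.imp_left (Or.imp hxy'.reachable.trans hxy'.reachable.trans))

theorem card_connectedComponent_deleteEdges_le [Finite W] (H : SimpleGraph W) (e : Sym2 W) :
    Nat.card (H.deleteEdges {e}).ConnectedComponent ≤ Nat.card H.ConnectedComponent + 1 := by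
  classical
  induction e using Sym2.ind with | _ u v
  set H' := H.deleteEdges {s(u, v)}
  let φ := ConnectedComponent.map (Hom.ofLE (deleteEdges_le {s(u, v)} : H' ≤ H))
  -- `φ` is injective away from the pair of components of `u` and `v`, which it may merge
  let f (c : H'.ConnectedComponent) : Option H.ConnectedComponent :=
    if c = H'.connectedComponentMk v then none else some (φ c)
  have hf : f.Injective := by
    refine ConnectedComponent.ind₂ fun a b hab ↦ ?_
    by_cases ha : H'.Reachable a v <;> by_cases hb : H'.Reachable b v <;>
      simp only [f, ConnectedComponent.eq, ha, hb, if_true, if_false, reduceCtorEq,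
        Option.some.injEq] at hab ⊢
    · exact ha.trans hb.symm
    · rcases (ConnectedComponent.exact hab).deleteEdges_or (u := u) (v := v) with
        h | ⟨hau | hav, hbu | hbv⟩
      all_goals first | exact h | exact hau.trans hbu.symm | contradiction
  calc Nat.card H'.ConnectedComponent ≤ Nat.card (Option H.ConnectedComponent) :=
        Nat.card_le_card_of_injective f hf
    _ = Nat.card H.ConnectedComponent + 1 := Finite.card_option

theorem IsBridge.card_connectedComponent_lt_deleteEdges [Finite W] {e : Sym2 W}
    (hbridge : H.IsBridge e) (he : e ∈ H.edgeSet) :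
    Nat.card H.ConnectedComponent < Nat.card (H.deleteEdges {e}).ConnectedComponent := by
  induction e using Sym2.ind with | _ u v
  have hφ := ConnectedComponent.surjective_map_ofLE (deleteEdges_le {s(u, v)} : H.deleteEdges _ ≤ H)
  refine lt_of_not_ge fun hle ↦ isBridge_iff.1 hbridge (ConnectedComponent.exact ?_)
  refine (hφ.bijective_of_nat_card_le hle).1 ?_
  simpa using (H.mem_edgeSet.1 he).reachable

theorem card_le_card_edgeSet_add_card_connectedComponent [Finite W] (H : SimpleGraph W) :
    Nat.card W ≤ Nat.card H.edgeSet + Nat.card H.ConnectedComponent := by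
  suffices ∀ s : Set (Sym2 W), s.Finite → ∀ H : SimpleGraph W, H.edgeSet = s →
      Nat.card W ≤ s.ncard + Nat.card H.ConnectedComponent from
    Nat.card_coe_set_eq H.edgeSet ▸ this _ (Set.toFinite _) H rfl
  intro s hs
  induction s, hs using Set.Finite.induction_on with
  | empty =>
    intro H hH
    simpa [edgeSet_eq_empty.1 hH] using Nat.card_le_card_of_injective _
      fun _ _ h ↦ reachable_bot.1 (ConnectedComponent.exact h)
  | @insert e s he hs ih =>
    intro H hH
    have hdel : (H.deleteEdges {e}).edgeSet = s := by
      rw [edgeSet_deleteEdges, hH, Set.insert_sdiff_self_of_notMem he]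
    have := ih _ hdel
    have := H.card_connectedComponent_deleteEdges_le e
    rw [Set.ncard_insert_of_notMem he hs]
    omega

theorem IsAcyclic.card_edgeSet_add_card_connectedComponent_le [Finite W] (hH : H.IsAcyclic) :
    Nat.card H.edgeSet + Nat.card H.ConnectedComponent ≤ Nat.card W := by
  suffices ∀ s : Set (Sym2 W), s.Finite → ∀ H : SimpleGraph W, H.IsAcyclic → H.edgeSet = s →
      s.ncard + Nat.card H.ConnectedComponent ≤ Nat.card W from
    Nat.card_coe_set_eq H.edgeSet ▸ this _ (Set.toFinite _) H hH rfl
  intro s hs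
  induction s, hs using Set.Finite.induction_on with
  | empty =>
    intro H _ _
    simpa using Nat.card_le_card_of_surjective H.connectedComponentMk Quot.mk_surjective
  | @insert e s he hs ih =>
    intro H hH hHe
    have hmem : e ∈ H.edgeSet := hHe ▸ Set.mem_insert e s
    have hdel : (H.deleteEdges {e}).edgeSet = s := by
      rw [edgeSet_deleteEdges, hHe, Set.insert_sdiff_self_of_notMem he]
    have := ih _ (hH.anti (deleteEdges_le _)) hdel
    have := (isAcyclic_iff_forall_isBridge.1 hH hmem).card_connectedComponent_lt_deleteEdges hmem
    rw [Set.ncard_insert_of_notMem he hs]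
    omega

end SimpleGraph

/-- Contracting `H` inside `G` yields a graph properly 2-coloured by `S` and `Sᶜ`. -/
structure ContractsToBipartition {V : Type*} (G H : SimpleGraph V) (S : Set V) : Prop where
  mem_iff_mem_of_adj : ∀ a b, H.Adj a b → (a ∈ S ↔ b ∈ S)
  reachable_of_adj : ∀ a b, G.Adj a b → (a ∈ S ↔ b ∈ S) → H.Reachable a b

section

variable {V : Type*} {G H : SimpleGraph V}

theorem colorable_two_contract_iff (F : Set (Sym2 V)) :
    (contract G F).Colorable 2 ↔ ∃ S : Set V, ContractsToBipartition G (fromEdgeSet F) S := by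
  let q := Quotient.mk (contractSetoid F)
  constructor
  · rintro ⟨C⟩
    refine ⟨{v | C (q v) = 0}, fun a b hab ↦ ?_, fun a b hab hside ↦ ?_⟩
    · simp [show q a = q b from Quotient.sound hab.reachable]
    · have hside : C (q a) = 0 ↔ C (q b) = 0 := hside
      have hcolor : C (q a) = C (q b) := by omega
      by_contra hnr
      exact C.valid ⟨fun h ↦ hnr (Quotient.exact h), a, b, rfl, rfl, hab⟩ hcolor
  · rintro ⟨S, hS⟩
    classical
    let c : Quotient (contractSetoid F) → Fin 2 :=
      Quotient.lift (fun v ↦ if v ∈ S then 0 else 1) fun a b hab ↦ by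
        simp [Reachable.mem_iff_mem hS.mem_iff_mem_of_adj hab]
    refine ⟨Coloring.mk c ?_⟩
    rintro _ _ ⟨hne, a, b, rfl, rfl, hab⟩ hc
    refine hne (Quotient.sound (hS.reachable_of_adj a b hab ?_))
    by_cases ha : a ∈ S <;> by_cases hb : b ∈ S <;> simp_all [c]

theorem srank_le_card_edgeSet_induce [Finite V] {T : Set V}
    (hT : ∀ a b, H.Adj a b → (a ∈ T ↔ b ∈ T))
    (hG : ∀ a b, G.Adj a b → a ∈ T → b ∈ T → H.Reachable a b) :
    srank G T ≤ Nat.card (H.induce T).edgeSet := by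
  have hcc := card_connectedComponent_le_of_forall_adj_reachable (H := G.induce T)
    (K := H.induce T) fun a b hab ↦ (hG a b hab a.2 b.2).induce hT a.2 b.2
  have := card_le_card_edgeSet_add_card_connectedComponent (H.induce T)
  unfold srank grank
  omega

theorem card_edgeSet_induce_add_card_edgeSet_induce_compl_le [Finite V] (H : SimpleGraph V)
    (S : Set V) :
    Nat.card (H.induce S).edgeSet + Nat.card (H.induce Sᶜ).edgeSet ≤ Nat.card H.edgeSet := by
  rw [← Nat.card_sum]
  refine Nat.card_le_card_of_injective _ ((Embedding.induce S).mapEdgeSet.injective.sumElim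
    (Embedding.induce Sᶜ).mapEdgeSet.injective ?_)
  rintro ⟨e₁, he₁⟩ ⟨e₂, he₂⟩ h
  induction e₁ using Sym2.ind with | _ x y
  induction e₂ using Sym2.ind with | _ x' y'
  have := congrArg Subtype.val h
  simp only [Embedding.mapEdgeSet_apply, Hom.mapEdgeSet_coe, Sym2.map_mk, Sym2.eq_iff] at this
  rcases this with ⟨hx, -⟩ | ⟨hx, -⟩
  · exact x'.2 ((show (x : V) = x' from hx) ▸ x.2)
  · exact y'.2 ((show (x : V) = y' from hx) ▸ x.2)

theorem ContractsToBipartition.srank_add_srank_compl_le [Finite V] {S : Set V}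
    (h : ContractsToBipartition G H S) : srank G S + srank G Sᶜ ≤ Nat.card H.edgeSet := by
  have hS := srank_le_card_edgeSet_induce h.mem_iff_mem_of_adj
    fun a b hab ha hb ↦ h.reachable_of_adj a b hab (iff_of_true ha hb)
  have hSc := srank_le_card_edgeSet_induce (T := Sᶜ)
    (fun a b hab ↦ not_congr (h.mem_iff_mem_of_adj a b hab))
    fun a b hab ha hb ↦ h.reachable_of_adj a b hab (iff_of_false ha hb)
  have := card_edgeSet_induce_add_card_edgeSet_induce_compl_le H S
  omega

theorem exists_le_card_edgeSet_le_srank [Finite V] (G : SimpleGraph V) (T : Set V) :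
    ∃ K ≤ G, Nat.card K.edgeSet ≤ srank G T ∧ (∀ a b, K.Adj a b → a ∈ T ∧ b ∈ T) ∧
      ∀ a b, G.Adj a b → a ∈ T → b ∈ T → K.Reachable a b := by
  obtain ⟨F, hFG, hF, hFreach⟩ := (G.induce T).exists_isAcyclic_reachable_eq_le
  refine ⟨F.spanningCoe, (map_monotone _ hFG).trans (G.spanningCoe_induce_le T), ?_, ?_, ?_⟩
  · have hcc : Nat.card F.ConnectedComponent = Nat.card (G.induce T).ConnectedComponent := by
      unfold ConnectedComponent
      rw [hFreach]
    have hmap : Nat.card F.spanningCoe.edgeSet ≤ Nat.card F.edgeSet := by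
      simpa only [Nat.card_coe_set_eq, edgeSet_map] using Set.ncard_image_le (Set.toFinite _)
    have := hF.card_edgeSet_add_card_connectedComponent_le
    unfold srank grank
    omega
  · rintro a b ⟨-, u, v, -, rfl, rfl⟩
    exact ⟨u.2, v.2⟩
  · intro a b hab ha hb
    have : F.Reachable ⟨a, ha⟩ ⟨b, hb⟩ :=
      hFreach ▸ (show (G.induce T).Adj ⟨a, ha⟩ ⟨b, hb⟩ from hab).reachable
    exact this.map (Embedding.spanningCoe F).toHom

theorem exists_contractsToBipartition [Finite V] (G : SimpleGraph V) (S : Set V) :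
    ∃ H ≤ G, Nat.card H.edgeSet ≤ srank G S + srank G Sᶜ ∧ ContractsToBipartition G H S := by
  obtain ⟨K, hKG, hK, hKS, hGK⟩ := exists_le_card_edgeSet_le_srank G S
  obtain ⟨K', hK'G, hK', hK'S, hGK'⟩ := exists_le_card_edgeSet_le_srank G Sᶜ
  refine ⟨K ⊔ K', sup_le hKG hK'G, ?_, fun a b hab ↦ ?_, fun a b hab hside ↦ ?_⟩
  · calc Nat.card (K ⊔ K').edgeSet ≤ Nat.card K.edgeSet + Nat.card K'.edgeSet := by
          simpa only [edgeSet_sup, Nat.card_coe_set_eq] using Set.ncard_union_le _ _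
      _ ≤ srank G S + srank G Sᶜ := add_le_add hK hK'
  · rcases hab with hab | hab
    · exact iff_of_true (hKS a b hab).1 (hKS a b hab).2
    · exact iff_of_false (hK'S a b hab).1 (hK'S a b hab).2
  · by_cases ha : a ∈ S
    · exact (hGK a b hab ha (hside.1 ha)).mono le_sup_left
    · exact (hGK' a b hab ha (mt hside.2 ha)).mono le_sup_right

end

theorem stmt6 {V : Type*} [Fintype V] (G : SimpleGraph V) (l : ℕ) :
    (∃ F : Set (Sym2 V), F ⊆ G.edgeSet ∧ Nat.card F ≤ l ∧
      (contract G F).Colorable 2) ↔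
    ∃ VL : Set V, srank G VL + srank G (VLᶜ) ≤ l := by
  constructor
  · rintro ⟨F, -, hFl, hcol⟩
    obtain ⟨S, hS⟩ := (colorable_two_contract_iff F).1 hcol
    have hF : Nat.card (fromEdgeSet F).edgeSet ≤ Nat.card F :=
      Nat.card_mono (Set.toFinite F) (edgeSet_fromEdgeSet F ▸ Set.sdiff_subset)
    exact ⟨S, hS.srank_add_srank_compl_le.trans (hF.trans hFl)⟩
  · rintro ⟨S, hSl⟩
    obtain ⟨H, hHG, hH, hS⟩ := exists_contractsToBipartition G S
    refine ⟨H.edgeSet, edgeSet_mono hHG, hH.trans hSl, (colorable_two_contract_iff _).2 ⟨S, ?_⟩⟩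
    rwa [fromEdgeSet_edgeSet]
end

section
/- In the reduction graph for the W[1]-hardness proof: given a graph G, construct G' by adding a universal vertex α adjacent to all vertices of G, plus q+1 new pendant vertices x_1,…,x_{q+1} each adjacent only to α. Then for any set F of edges of G' with G'[V(F)] a forest and |F| ≥ 2q+1 (where V(G) is partitioned into q cliques V_1,…,V_q), the vertex α belongs to V(F). -/
open SimpleGraph

/-- The graph `G'` of the W[1]-hardness reduction: `G` plus a universal vertex `α`
(the `Sum.inr (Sum.inl ())` vertex) and `q + 1` pendant vertices adjacent only to `α`. -/
def Gp {V : Type*} (G : SimpleGraph V) (q : ℕ) :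
    SimpleGraph (V ⊕ (Unit ⊕ Fin (q + 1))) :=
  SimpleGraph.fromRel (fun a b =>
    match a, b with
    | .inl u, .inl v => G.Adj u v
    | .inl _, .inr (.inl _) => True
    | .inr (.inl _), .inr (.inr _) => True
    | _, _ => False)

/-! If `α ∉ V(F)`, every edge of `F` is an edge of `G`, so `V(F)` consists of vertices of `G`.
Three vertices of `V(F)` in one clique `V_i` would span a triangle in the forest `G'[V(F)]`,
hence `|V(F)| ≤ 2q`; and a forest has fewer edges than vertices, so `|F| < 2q`. -/

namespace SimpleGraph

lemma IsAcyclic.card_edgeSet_lt {V : Type*} [Finite V] [Nonempty V] {G : SimpleGraph V}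
    (hG : G.IsAcyclic) : Nat.card G.edgeSet < Nat.card V := by
  have := Fintype.ofFinite V
  obtain ⟨T, hGT, -, hT⟩ := connected_top.exists_isTree_le_of_le_of_isAcyclic le_top hG
  calc Nat.card G.edgeSet ≤ Nat.card T.edgeSet :=
        Nat.card_mono (Set.toFinite _) (edgeSet_mono hGT)
    _ < Nat.card V := by
        classical
        rw [Nat.card_eq_fintype_card, ← edgeFinset_card, Nat.card_eq_fintype_card,
          ← hT.card_edgeFinset]
        omega

end SimpleGraph

lemma subset_image_edgeSet_induce_edgeVerts {W : Type*} {H : SimpleGraph W} {F : Set (Sym2 W)}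
    (hF : F ⊆ H.edgeSet) :
    F ⊆ Sym2.map Subtype.val '' (H.induce (edgeVerts F)).edgeSet := by
  intro e he
  induction e using Sym2.ind with
  | _ x y =>
    exact ⟨s(⟨x, _, he, Sym2.mem_mk_left x y⟩, ⟨y, _, he, Sym2.mem_mk_right x y⟩), hF he, rfl⟩

lemma ncard_le_card_edgeSet_induce_edgeVerts {W : Type*} [Finite W] {H : SimpleGraph W}
    {F : Set (Sym2 W)} (hF : F ⊆ H.edgeSet) :
    F.ncard ≤ Nat.card (H.induce (edgeVerts F)).edgeSet :=
  calc F.ncard ≤ (Sym2.map Subtype.val '' (H.induce (edgeVerts F)).edgeSet).ncard :=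
        Set.ncard_le_ncard (subset_image_edgeSet_induce_edgeVerts hF) (Set.toFinite _)
    _ ≤ Nat.card (H.induce (edgeVerts F)).edgeSet :=
        (Set.ncard_image_le (Set.toFinite _)).trans_eq (Nat.card_coe_set_eq _).symm

lemma ncard_lt_ncard_edgeVerts {W : Type*} [Finite W] {H : SimpleGraph W} {F : Set (Sym2 W)}
    (hF : F ⊆ H.edgeSet) (hacyc : (H.induce (edgeVerts F)).IsAcyclic) (hne : F.Nonempty) :
    F.ncard < (edgeVerts F).ncard := by
  obtain ⟨e, he⟩ := hne
  have : Nonempty (edgeVerts F) := ⟨⟨_, e, he, Sym2.out_fst_mem e⟩⟩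
  calc F.ncard ≤ Nat.card (H.induce (edgeVerts F)).edgeSet :=
        ncard_le_card_edgeSet_induce_edgeVerts hF
    _ < Nat.card (edgeVerts F) := hacyc.card_edgeSet_lt
    _ = (edgeVerts F).ncard := Nat.card_coe_set_eq _

lemma ncard_le_two_mul_card_of_cliqueFreeOn {V ι : Type*} [Finite V] [Fintype ι]
    {G : SimpleGraph V} (P : V → ι) (hP : ∀ u v, P u = P v → u ≠ v → G.Adj u v) {s : Set V}
    (hs : G.CliqueFreeOn s 3) : s.ncard ≤ 2 * Fintype.card ι := by
  classical
  have := Fintype.ofFinite V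
  have hfiber : ∀ i, (s.toFinset.filter (P · = i)).card ≤ 2 := by
    intro i
    by_contra! h
    obtain ⟨u, hu, v, hv, w, hw, huv, huw, hvw⟩ := Finset.two_lt_card.mp h
    simp only [Finset.mem_filter, Set.mem_toFinset] at hu hv hw
    refine hs (t := {u, v, w}) (by simp [Set.insert_subset_iff, hu.1, hv.1, hw.1]) ?_
    exact is3Clique_triple_iff.mpr ⟨hP u v (hu.2.trans hv.2.symm) huv,
      hP u w (hu.2.trans hw.2.symm) huw, hP v w (hv.2.trans hw.2.symm) hvw⟩
  rw [Set.ncard_eq_toFinset_card', ← Finset.card_univ]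
  exact Finset.card_le_mul_card_image_of_maps_to (fun _ _ ↦ Finset.mem_univ _) 2
    fun i _ ↦ hfiber i

namespace Gp

variable {V : Type*} (G : SimpleGraph V) (q : ℕ)

lemma inl_adj_inl {u v : V} : (Gp G q).Adj (Sum.inl u) (Sum.inl v) ↔ G.Adj u v := by
  simp only [Gp, fromRel_adj, ne_eq, Sum.inl.injEq]
  exact ⟨fun h ↦ h.2.elim id G.adj_symm, fun h ↦ ⟨h.ne, Or.inl h⟩⟩

def inlHom : G →g Gp G q where
  toFun := Sum.inl
  map_rel' := (inl_adj_inl G q).mpr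

variable {G q}

lemma mem_range_inl_of_adj {x y : V ⊕ (Unit ⊕ Fin (q + 1))} (h : (Gp G q).Adj x y)
    (hx : x ≠ Sum.inr (Sum.inl ())) (hy : y ≠ Sum.inr (Sum.inl ())) : x ∈ Set.range Sum.inl := by
  rcases x with a | ⟨⟨⟩⟩ | i <;> rcases y with b | ⟨⟨⟩⟩ | j <;> simp_all [Gp]

lemma edgeVerts_subset_range_inl {F : Set (Sym2 (V ⊕ (Unit ⊕ Fin (q + 1))))}
    (hF : F ⊆ (Gp G q).edgeSet) (hα : Sum.inr (Sum.inl ()) ∉ edgeVerts F) :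
    edgeVerts F ⊆ Set.range Sum.inl := by
  rintro x ⟨e, he, hxe⟩
  have hne : ∀ z ∈ e, z ≠ Sum.inr (Sum.inl ()) := fun z hz h ↦ hα ⟨e, he, h ▸ hz⟩
  induction e using Sym2.ind with
  | _ a b =>
    have hab : (Gp G q).Adj a b := hF he
    rcases Sym2.mem_iff.mp hxe with rfl | rfl
    · exact mem_range_inl_of_adj hab (hne _ (Sym2.mem_mk_left _ _)) (hne _ (Sym2.mem_mk_right _ _))
    · exact mem_range_inl_of_adj hab.symm (hne _ (Sym2.mem_mk_right _ _))
        (hne _ (Sym2.mem_mk_left _ _))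

end Gp

theorem stmt11 {V : Type*} [Fintype V] (G : SimpleGraph V) (q : ℕ)
    (P : V → Fin q) (hclique : ∀ u v : V, P u = P v → u ≠ v → G.Adj u v)
    (F : Set (Sym2 (V ⊕ (Unit ⊕ Fin (q + 1)))))
    (hFE : F ⊆ (Gp G q).edgeSet)
    (hforest : ((Gp G q).induce (edgeVerts F)).IsAcyclic)
    (hcard : 2 * q + 1 ≤ Nat.card F) :
    (Sum.inr (Sum.inl ()) : V ⊕ (Unit ⊕ Fin (q + 1))) ∈ edgeVerts F := by
  by_contra hα
  set S := Sum.inl ⁻¹' edgeVerts F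
  have hverts : edgeVerts F = Sum.inl '' S :=
    (Set.image_preimage_eq_of_subset (Gp.edgeVerts_subset_range_inl hFE hα)).symm
  have hacyc : (G.induce S).IsAcyclic :=
    hforest.comap (induceHom (Gp.inlHom G q) (Set.mapsTo_preimage _ _))
      (induceHom_injective _ _ Sum.inl_injective.injOn)
  have hS : G.CliqueFreeOn S 3 := (G.cliqueFree_induce_iff S 3).mp (hacyc.cliqueFree le_rfl)
  rw [Nat.card_coe_set_eq] at hcard
  have hFne : F.Nonempty := Set.nonempty_of_ncard_ne_zero (by omega)
  have hlt := ncard_lt_ncard_edgeVerts hFE hforest hFne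
  have hle := ncard_le_two_mul_card_of_cliqueFreeOn P hclique hS
  rw [hverts, Set.ncard_image_of_injective _ Sum.inl_injective] at hlt
  rw [Fintype.card_fin] at hle
  omega
end

section
/- Let G be a graph, X a minimum vertex cover of G with X also an independent set (so G is bipartite with parts X and Y = V(G)\X), let M be a matching saturating X, and let k = d. If ⟨V_L, V_R⟩ is a partition of V(G) with E(V_L ∩ Y, V_R ∩ X) = ∅ and |V_R ∩ Y| − |V_R ∩ X| ≤ 0, then Y ∩ V_R consists exactly of the M-partners of the vertices in X ∩ V_R; in particular |Y ∩ V_R| = |X ∩ V_R| and every vertex of Y ∩ V_R is matched by M to a vertex of X ∩ V_R. -/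
open SimpleGraph

/-! The `M`-partners of the vertices of `X ∩ V_R` are pairwise distinct, lie outside `X` because
`X` is independent, and lie in `V_R` because no edge joins `Y \ V_R` to `X ∩ V_R`. They thus form
a subset of `Y ∩ V_R` of size `|X ∩ V_R| ≥ |Y ∩ V_R|`, hence all of it. -/

theorem SimpleGraph.Subgraph.IsMatching.ncard_setOf_exists_adj {V : Type*} {G : SimpleGraph V}
    {M : G.Subgraph} (hM : M.IsMatching) {A : Set V} (hA : A ⊆ M.verts) :
    {y | ∃ x ∈ A, M.Adj x y}.ncard = A.ncard := by
  refine (Set.ncard_congr (t := {y | ∃ x ∈ A, M.Adj x y}) (fun x hx => (hM (hA hx)).choose)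
    (fun x hx => ⟨x, hx, (hM (hA hx)).choose_spec.1⟩) ?_ ?_).symm
  · intro a b ha hb hab
    have hb' := (hM (hA hb)).choose_spec.1
    rw [← hab] at hb'
    exact hM.eq_of_adj_right (hM (hA ha)).choose_spec.1 hb'
  · rintro y ⟨x, hx, hxy⟩
    exact ⟨x, hx, hM.eq_of_adj_left (hM (hA hx)).choose_spec.1 hxy⟩

theorem stmt13_general {V : Type*} [Fintype V] (G : SimpleGraph V) (X : Set V)
    (hXind : ∀ u ∈ X, ∀ v ∈ X, ¬ G.Adj u v)
    (M : G.Subgraph) (hM : M.IsMatching) (hsat : X ⊆ M.verts)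
    (VR : Set V)
    (hcross : ∀ y ∈ (Xᶜ : Set V), y ∉ VR → ∀ x ∈ X ∩ VR, ¬ G.Adj y x)
    (hbal : Nat.card ↥((Xᶜ : Set V) ∩ VR) ≤ Nat.card ↥(X ∩ VR)) :
    ((Xᶜ : Set V) ∩ VR) = {y | ∃ x ∈ X ∩ VR, M.Adj x y} ∧
    Nat.card ↥((Xᶜ : Set V) ∩ VR) = Nat.card ↥(X ∩ VR) ∧
    ∀ y ∈ ((Xᶜ : Set V) ∩ VR), ∃ x ∈ X ∩ VR, M.Adj x y := by
  set S := {y | ∃ x ∈ X ∩ VR, M.Adj x y}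
  have hcard : S.ncard = (X ∩ VR).ncard :=
    hM.ncard_setOf_exists_adj (Set.inter_subset_left.trans hsat)
  have hsub : S ⊆ Xᶜ ∩ VR := by
    rintro y ⟨x, hx, hxy⟩
    have hyX : y ∉ X := fun hy => hXind x hx.1 y hy hxy.adj_sub
    exact ⟨hyX, by_contra fun hyVR => hcross y hyX hyVR x hx hxy.adj_sub.symm⟩
  rw [Nat.card_coe_set_eq, Nat.card_coe_set_eq] at hbal ⊢
  have hS : S = Xᶜ ∩ VR := Set.eq_of_subset_of_ncard_le hsub (hcard ▸ hbal) (Set.toFinite _)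
  exact ⟨hS.symm, hS ▸ hcard, hS.ge⟩

theorem stmt13 {V : Type*} [Fintype V] (G : SimpleGraph V) (X : Set V)
    (hX : IsMinVertexCover G X)
    (hXind : ∀ u ∈ X, ∀ v ∈ X, ¬ G.Adj u v)
    (M : G.Subgraph) (hM : M.IsMatching) (hsat : X ⊆ M.verts)
    (VR : Set V)
    (hcross : ∀ y ∈ (Xᶜ : Set V), y ∉ VR → ∀ x ∈ X ∩ VR, ¬ G.Adj y x)
    (hbal : Nat.card ↥((Xᶜ : Set V) ∩ VR) ≤ Nat.card ↥(X ∩ VR)) :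
    ((Xᶜ : Set V) ∩ VR) = {y | ∃ x ∈ X ∩ VR, M.Adj x y} ∧
    Nat.card ↥((Xᶜ : Set V) ∩ VR) = Nat.card ↥(X ∩ VR) ∧
    ∀ y ∈ ((Xᶜ : Set V) ∩ VR), ∃ x ∈ X ∩ VR, M.Adj x y :=
  stmt13_general G X hXind M hM hsat VR hcross hbal
end
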